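/- arXiv:2509.23995 — 2 statements merged into one kernel-verified Lean document; each statement's English description precedes it below -/
import Mathlib

section
/- Define the downsampling b[n1,n2] = (1/4)(a[2n1−1,2n2−1] + a[2n1−1,2n2] + a[2n1,2n2−1] + a[2n1,2n2]) for a finitely supported a : ℤ² → ℝ. Then for each (n1,n2), |(h_{1,1}∗b)[n1,n2]| is bounded by (1/4)|(h_{1,1}∗a)[2n1−1,2n2−1]| + (1/2)|(h_{1,1}∗a)[2n1−1,2n2]| + (1/4)|(h_{1,1}∗a)[2n1−1,2n2+1]| + (1/2)|(h_{1,1}∗a)[2n1,2n2−1]| + |(h_{1,1}∗a)[2n1,2n2]| + (1/2)|(h_{1,1}∗a)[2n1,2n2+1]| + (1/4)|(h_{1,1}∗a)[2n1+1,2n2−1]| + (1/2)|(h_{1,1}∗a)[2n1+1,2n2]| + (1/4)|(h_{1,1}∗a)[2n1+1,2n2+1]|. Consequently, ‖h_{1,1}∗b‖_{ℓ1} ≤ ‖h_{1,1}∗a‖_{ℓ1}. -/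
open MeasureTheory Set Filter

noncomputable section

abbrev K2 : Set (ℝ × ℝ) := Icc (0:ℝ) 1 ×ˢ Icc (0:ℝ) 1

def TV (m : SignedMeasure (ℝ × ℝ)) : ℝ := (m.totalVariation univ).toReal

def sInt (m : SignedMeasure (ℝ × ℝ)) (φ : ℝ × ℝ → ℝ) : ℝ :=
  ∫ x, φ x ∂m.toJordanDecomposition.posPart - ∫ x, φ x ∂m.toJordanDecomposition.negPart

def IsTest (φ : ℝ × ℝ → ℝ) : Prop := ContDiff ℝ (⊤ : ℕ∞) φ ∧ HasCompactSupport φ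

def pd1 (φ : ℝ × ℝ → ℝ) : ℝ × ℝ → ℝ := fun x => fderiv ℝ φ x (1, 0)
def pd2 (φ : ℝ × ℝ → ℝ) : ℝ × ℝ → ℝ := fun x => fderiv ℝ φ x (0, 1)

def IsDeriv1 (f : ℝ × ℝ → ℝ) (ν : SignedMeasure (ℝ × ℝ)) : Prop :=
  ∀ φ, IsTest φ → ∫ x, f x * pd1 φ x = - sInt ν φ

def IsDeriv2 (f : ℝ × ℝ → ℝ) (ν : SignedMeasure (ℝ × ℝ)) : Prop :=
  ∀ φ, IsTest φ → ∫ x, f x * pd2 φ x = - sInt ν φ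

def IsMixedDeriv (f : ℝ × ℝ → ℝ) (m : SignedMeasure (ℝ × ℝ)) : Prop :=
  ∀ φ, IsTest φ → ∫ x, f x * pd1 (pd2 φ) x = sInt m φ

def SuppIn (m : SignedMeasure (ℝ × ℝ)) (s : Set (ℝ × ℝ)) : Prop :=
  m.totalVariation sᶜ = 0

def MemM0 (f : ℝ × ℝ → ℝ) (m : SignedMeasure (ℝ × ℝ)) : Prop :=
  IsMixedDeriv f m ∧ SuppIn m K2 ∧ (∀ x ∉ K2, f x = 0) ∧
  (∀ᵐ x : ℝ × ℝ, f x = m (Icc 0 x.1 ×ˢ Icc 0 x.2))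

def Nmix (θ : ℝ) (m ν₁ ν₂ : SignedMeasure (ℝ × ℝ)) : ℝ :=
  θ * TV m + (1 - θ) * (TV ν₁ + TV ν₂)

def ind (A : Set (ℝ × ℝ)) : ℝ × ℝ → ℝ := A.indicator (fun _ => 1)

def h11 (a : ℤ × ℤ → ℝ) (p : ℤ × ℤ) : ℝ :=
  a p - a (p.1 + 1, p.2) - a (p.1, p.2 + 1) + a (p.1 + 1, p.2 + 1)

def h10 (a : ℤ × ℤ → ℝ) (p : ℤ × ℤ) : ℝ := a p - a (p.1 + 1, p.2)

def h01 (a : ℤ × ℤ → ℝ) (p : ℤ × ℤ) : ℝ := a p - a (p.1, p.2 + 1)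


lemma abs9 (x1 x2 x3 x4 x5 x6 x7 x8 x9 : ℝ) :
    |x1+x2+x3+x4+x5+x6+x7+x8+x9| ≤ |x1|+|x2|+|x3|+|x4|+|x5|+|x6|+|x7|+|x8|+|x9| := by
  have h1 := abs_add_le (x1+x2+x3+x4+x5+x6+x7+x8) x9
  have h2 := abs_add_le (x1+x2+x3+x4+x5+x6+x7) x8
  have h3 := abs_add_le (x1+x2+x3+x4+x5+x6) x7
  have h4 := abs_add_le (x1+x2+x3+x4+x5) x6
  have h5 := abs_add_le (x1+x2+x3+x4) x5
  have h6 := abs_add_le (x1+x2+x3) x4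
  have h7 := abs_add_le (x1+x2) x3
  have h8 := abs_add_le x1 x2
  linarith

lemma supp_comp_fin {c : ℤ × ℤ → ℝ} (hc : (Function.support c).Finite)
    (f : ℤ × ℤ → ℤ × ℤ) (hf : Function.Injective f) :
    (Function.support (fun p => c (f p))).Finite := by
  refine (hc.preimage hf.injOn).subset ?_
  intro p hp
  exact hp

lemma supp_h11_fin {c : ℤ × ℤ → ℝ} (hc : (Function.support c).Finite) :
    (Function.support (fun q => |h11 c q|)).Finite := by
  have h1 := supp_comp_fin hc (fun q : ℤ × ℤ => (q.1 + 1, q.2))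
    (fun x y h => by simp only [Prod.mk.injEq] at h; exact Prod.ext_iff.mpr ⟨by omega, by omega⟩)
  have h2 := supp_comp_fin hc (fun q : ℤ × ℤ => (q.1, q.2 + 1))
    (fun x y h => by simp only [Prod.mk.injEq] at h; exact Prod.ext_iff.mpr ⟨by omega, by omega⟩)
  have h3 := supp_comp_fin hc (fun q : ℤ × ℤ => (q.1 + 1, q.2 + 1))
    (fun x y h => by simp only [Prod.mk.injEq] at h; exact Prod.ext_iff.mpr ⟨by omega, by omega⟩)
  refine (((hc.union h1).union h2).union h3).subset ?_
  intro q hq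
  simp only [Function.mem_support, Set.mem_union] at hq ⊢
  by_contra hcon
  push_neg at hcon
  obtain ⟨⟨⟨e0, e1⟩, e2⟩, e3⟩ := hcon
  exact hq (by simp [h11, e0, e1, e2, e3])

def par2 : (ℤ × ℤ) × (Bool × Bool) ≃ ℤ × ℤ where
  toFun x := (2 * x.1.1 + (if x.2.1 then 1 else 0), 2 * x.1.2 + (if x.2.2 then 1 else 0))
  invFun q := ((q.1 / 2, q.2 / 2), (decide (q.1 % 2 = 1), decide (q.2 % 2 = 1)))
  left_inv := by
    rintro ⟨⟨p1, p2⟩, ⟨s, t⟩⟩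
    cases s <;> cases t <;>
      simp only [if_true, if_false, Prod.mk.injEq, decide_eq_true_eq,
        decide_eq_false_iff_not, Bool.false_eq_true, ite_false, ite_true] <;>
      omega
  right_inv := by
    rintro ⟨q1, q2⟩
    simp only [Prod.mk.injEq, decide_eq_true_eq]
    constructor <;> · split <;> omega

theorem stmt13 (a : ℤ × ℤ → ℝ) (ha : (Function.support a).Finite)
    (b : ℤ × ℤ → ℝ)
    (hb : ∀ p : ℤ × ℤ, b p = (1/4) * (a (2*p.1 - 1, 2*p.2 - 1) + a (2*p.1 - 1, 2*p.2)
      + a (2*p.1, 2*p.2 - 1) + a (2*p.1, 2*p.2))) :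
    (∀ p : ℤ × ℤ, |h11 b p| ≤
        (1/4) * |h11 a (2*p.1 - 1, 2*p.2 - 1)| + (1/2) * |h11 a (2*p.1 - 1, 2*p.2)|
      + (1/4) * |h11 a (2*p.1 - 1, 2*p.2 + 1)| + (1/2) * |h11 a (2*p.1, 2*p.2 - 1)|
      + |h11 a (2*p.1, 2*p.2)| + (1/2) * |h11 a (2*p.1, 2*p.2 + 1)|
      + (1/4) * |h11 a (2*p.1 + 1, 2*p.2 - 1)| + (1/2) * |h11 a (2*p.1 + 1, 2*p.2)|
      + (1/4) * |h11 a (2*p.1 + 1, 2*p.2 + 1)|) ∧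
    ∑' p : ℤ × ℤ, |h11 b p| ≤ ∑' p : ℤ × ℤ, |h11 a p| := by
  have hpt : ∀ p : ℤ × ℤ, |h11 b p| ≤
        (1/4) * |h11 a (2*p.1 - 1, 2*p.2 - 1)| + (1/2) * |h11 a (2*p.1 - 1, 2*p.2)|
      + (1/4) * |h11 a (2*p.1 - 1, 2*p.2 + 1)| + (1/2) * |h11 a (2*p.1, 2*p.2 - 1)|
      + |h11 a (2*p.1, 2*p.2)| + (1/2) * |h11 a (2*p.1, 2*p.2 + 1)|
      + (1/4) * |h11 a (2*p.1 + 1, 2*p.2 - 1)| + (1/2) * |h11 a (2*p.1 + 1, 2*p.2)|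
      + (1/4) * |h11 a (2*p.1 + 1, 2*p.2 + 1)| := by
    intro p
    have hk : h11 b p =
        (1/4) * h11 a (2*p.1 - 1, 2*p.2 - 1) + (1/2) * h11 a (2*p.1 - 1, 2*p.2)
      + (1/4) * h11 a (2*p.1 - 1, 2*p.2 + 1) + (1/2) * h11 a (2*p.1, 2*p.2 - 1)
      + h11 a (2*p.1, 2*p.2) + (1/2) * h11 a (2*p.1, 2*p.2 + 1)
      + (1/4) * h11 a (2*p.1 + 1, 2*p.2 - 1) + (1/2) * h11 a (2*p.1 + 1, 2*p.2)
      + (1/4) * h11 a (2*p.1 + 1, 2*p.2 + 1) := by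
      simp only [h11, hb]
      ring_nf
    rw [hk]
    refine (abs9 _ _ _ _ _ _ _ _ _).trans_eq ?_
    rw [abs_mul, abs_mul, abs_mul, abs_mul, abs_mul, abs_mul, abs_mul, abs_mul,
      show |(1/4 : ℝ)| = 1/4 from by norm_num, show |(1/2 : ℝ)| = 1/2 from by norm_num]
  refine ⟨hpt, ?_⟩
  -- summability facts
  have hSa : Summable (fun q : ℤ × ℤ => |h11 a q|) :=
    summable_of_finite_support (supp_h11_fin ha)
  have hScomp : ∀ f : ℤ × ℤ → ℤ × ℤ, Function.Injective f →
      Summable (fun p : ℤ × ℤ => |h11 a (f p)|) := fun f hf => hSa.comp_injective hf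
  have hfb : (Function.support b).Finite := by
    have j1 := supp_comp_fin ha (fun p : ℤ × ℤ => (2*p.1 - 1, 2*p.2 - 1))
      (fun x y h => by simp only [Prod.mk.injEq] at h; exact Prod.ext_iff.mpr ⟨by omega, by omega⟩)
    have j2 := supp_comp_fin ha (fun p : ℤ × ℤ => (2*p.1 - 1, 2*p.2))
      (fun x y h => by simp only [Prod.mk.injEq] at h; exact Prod.ext_iff.mpr ⟨by omega, by omega⟩)
    have j3 := supp_comp_fin ha (fun p : ℤ × ℤ => (2*p.1, 2*p.2 - 1))
      (fun x y h => by simp only [Prod.mk.injEq] at h; exact Prod.ext_iff.mpr ⟨by omega, by omega⟩)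
    have j4 := supp_comp_fin ha (fun p : ℤ × ℤ => (2*p.1, 2*p.2))
      (fun x y h => by simp only [Prod.mk.injEq] at h; exact Prod.ext_iff.mpr ⟨by omega, by omega⟩)
    refine (((j1.union j2).union j3).union j4).subset ?_
    intro p hp
    simp only [Function.mem_support, Set.mem_union] at hp ⊢
    by_contra hcon
    push_neg at hcon
    obtain ⟨⟨⟨e1, e2⟩, e3⟩, e4⟩ := hcon
    exact hp (by rw [hb p]; simp [e1, e2, e3, e4])
  have hSb : Summable (fun q : ℤ × ℤ => |h11 b q|) :=
    summable_of_finite_support (supp_h11_fin hfb)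
  have s1 : Summable (fun p : ℤ × ℤ => |h11 a (2*p.1 - 1, 2*p.2 - 1)|) :=
    hScomp (fun p => (2*p.1 - 1, 2*p.2 - 1))
      (fun x y h => by simp only [Prod.mk.injEq] at h; exact Prod.ext_iff.mpr ⟨by omega, by omega⟩)
  have s2 : Summable (fun p : ℤ × ℤ => |h11 a (2*p.1 - 1, 2*p.2)|) :=
    hScomp (fun p => (2*p.1 - 1, 2*p.2))
      (fun x y h => by simp only [Prod.mk.injEq] at h; exact Prod.ext_iff.mpr ⟨by omega, by omega⟩)
  have s3 : Summable (fun p : ℤ × ℤ => |h11 a (2*p.1 - 1, 2*p.2 + 1)|) :=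
    hScomp (fun p => (2*p.1 - 1, 2*p.2 + 1))
      (fun x y h => by simp only [Prod.mk.injEq] at h; exact Prod.ext_iff.mpr ⟨by omega, by omega⟩)
  have s4 : Summable (fun p : ℤ × ℤ => |h11 a (2*p.1, 2*p.2 - 1)|) :=
    hScomp (fun p => (2*p.1, 2*p.2 - 1))
      (fun x y h => by simp only [Prod.mk.injEq] at h; exact Prod.ext_iff.mpr ⟨by omega, by omega⟩)
  have s5 : Summable (fun p : ℤ × ℤ => |h11 a (2*p.1, 2*p.2)|) :=
    hScomp (fun p => (2*p.1, 2*p.2))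
      (fun x y h => by simp only [Prod.mk.injEq] at h; exact Prod.ext_iff.mpr ⟨by omega, by omega⟩)
  have s6 : Summable (fun p : ℤ × ℤ => |h11 a (2*p.1, 2*p.2 + 1)|) :=
    hScomp (fun p => (2*p.1, 2*p.2 + 1))
      (fun x y h => by simp only [Prod.mk.injEq] at h; exact Prod.ext_iff.mpr ⟨by omega, by omega⟩)
  have s7 : Summable (fun p : ℤ × ℤ => |h11 a (2*p.1 + 1, 2*p.2 - 1)|) :=
    hScomp (fun p => (2*p.1 + 1, 2*p.2 - 1))
      (fun x y h => by simp only [Prod.mk.injEq] at h; exact Prod.ext_iff.mpr ⟨by omega, by omega⟩)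
  have s8 : Summable (fun p : ℤ × ℤ => |h11 a (2*p.1 + 1, 2*p.2)|) :=
    hScomp (fun p => (2*p.1 + 1, 2*p.2))
      (fun x y h => by simp only [Prod.mk.injEq] at h; exact Prod.ext_iff.mpr ⟨by omega, by omega⟩)
  have s9 : Summable (fun p : ℤ × ℤ => |h11 a (2*p.1 + 1, 2*p.2 + 1)|) :=
    hScomp (fun p => (2*p.1 + 1, 2*p.2 + 1))
      (fun x y h => by simp only [Prod.mk.injEq] at h; exact Prod.ext_iff.mpr ⟨by omega, by omega⟩)
  have S2 := (s1.mul_left (1/4)).add (s2.mul_left (1/2))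
  have S3 := S2.add (s3.mul_left (1/4))
  have S4 := S3.add (s4.mul_left (1/2))
  have S5 := S4.add s5
  have S6 := S5.add (s6.mul_left (1/2))
  have S7 := S6.add (s7.mul_left (1/4))
  have S8 := S7.add (s8.mul_left (1/2))
  have sR := S8.add (s9.mul_left (1/4))
  -- shift lemmas
  have shf : ∀ F : ℤ × ℤ → ℝ, ∑' p : ℤ × ℤ, F (p.1 - 1, p.2) = ∑' p : ℤ × ℤ, F p :=
    fun F => Equiv.tsum_eq ((Equiv.subRight (1 : ℤ)).prodCongr (Equiv.refl ℤ)) F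
  have shs : ∀ F : ℤ × ℤ → ℝ, ∑' p : ℤ × ℤ, F (p.1, p.2 - 1) = ∑' p : ℤ × ℤ, F p :=
    fun F => Equiv.tsum_eq ((Equiv.refl ℤ).prodCongr (Equiv.subRight (1 : ℤ))) F
  have shb : ∀ F : ℤ × ℤ → ℝ, ∑' p : ℤ × ℤ, F (p.1 - 1, p.2 - 1) = ∑' p : ℤ × ℤ, F p :=
    fun F => Equiv.tsum_eq ((Equiv.subRight (1 : ℤ)).prodCongr (Equiv.subRight (1 : ℤ))) F
  have sh1 : ∑' p : ℤ × ℤ, |h11 a (2*p.1 - 1, 2*p.2 - 1)|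
      = ∑' p : ℤ × ℤ, |h11 a (2*p.1 + 1, 2*p.2 + 1)| :=
    calc ∑' p : ℤ × ℤ, |h11 a (2*p.1 - 1, 2*p.2 - 1)|
        = ∑' p : ℤ × ℤ, |h11 a (2*(p.1 - 1) + 1, 2*(p.2 - 1) + 1)| :=
          tsum_congr fun p => by
            rw [show (2*(p.1 - 1) + 1 : ℤ) = 2*p.1 - 1 from by ring,
              show (2*(p.2 - 1) + 1 : ℤ) = 2*p.2 - 1 from by ring]
      _ = ∑' p : ℤ × ℤ, |h11 a (2*p.1 + 1, 2*p.2 + 1)| :=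
          shb (fun q => |h11 a (2*q.1 + 1, 2*q.2 + 1)|)
  have sh2 : ∑' p : ℤ × ℤ, |h11 a (2*p.1 - 1, 2*p.2)|
      = ∑' p : ℤ × ℤ, |h11 a (2*p.1 + 1, 2*p.2)| :=
    calc ∑' p : ℤ × ℤ, |h11 a (2*p.1 - 1, 2*p.2)|
        = ∑' p : ℤ × ℤ, |h11 a (2*(p.1 - 1) + 1, 2*p.2)| :=
          tsum_congr fun p => by
            rw [show (2*(p.1 - 1) + 1 : ℤ) = 2*p.1 - 1 from by ring]
      _ = ∑' p : ℤ × ℤ, |h11 a (2*p.1 + 1, 2*p.2)| :=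
          shf (fun q => |h11 a (2*q.1 + 1, 2*q.2)|)
  have sh3 : ∑' p : ℤ × ℤ, |h11 a (2*p.1 - 1, 2*p.2 + 1)|
      = ∑' p : ℤ × ℤ, |h11 a (2*p.1 + 1, 2*p.2 + 1)| :=
    calc ∑' p : ℤ × ℤ, |h11 a (2*p.1 - 1, 2*p.2 + 1)|
        = ∑' p : ℤ × ℤ, |h11 a (2*(p.1 - 1) + 1, 2*p.2 + 1)| :=
          tsum_congr fun p => by
            rw [show (2*(p.1 - 1) + 1 : ℤ) = 2*p.1 - 1 from by ring]
      _ = ∑' p : ℤ × ℤ, |h11 a (2*p.1 + 1, 2*p.2 + 1)| :=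
          shf (fun q => |h11 a (2*q.1 + 1, 2*q.2 + 1)|)
  have sh4 : ∑' p : ℤ × ℤ, |h11 a (2*p.1, 2*p.2 - 1)|
      = ∑' p : ℤ × ℤ, |h11 a (2*p.1, 2*p.2 + 1)| :=
    calc ∑' p : ℤ × ℤ, |h11 a (2*p.1, 2*p.2 - 1)|
        = ∑' p : ℤ × ℤ, |h11 a (2*p.1, 2*(p.2 - 1) + 1)| :=
          tsum_congr fun p => by
            rw [show (2*(p.2 - 1) + 1 : ℤ) = 2*p.2 - 1 from by ring]
      _ = ∑' p : ℤ × ℤ, |h11 a (2*p.1, 2*p.2 + 1)| :=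
          shs (fun q => |h11 a (2*q.1, 2*q.2 + 1)|)
  have sh7 : ∑' p : ℤ × ℤ, |h11 a (2*p.1 + 1, 2*p.2 - 1)|
      = ∑' p : ℤ × ℤ, |h11 a (2*p.1 + 1, 2*p.2 + 1)| :=
    calc ∑' p : ℤ × ℤ, |h11 a (2*p.1 + 1, 2*p.2 - 1)|
        = ∑' p : ℤ × ℤ, |h11 a (2*p.1 + 1, 2*(p.2 - 1) + 1)| :=
          tsum_congr fun p => by
            rw [show (2*(p.2 - 1) + 1 : ℤ) = 2*p.2 - 1 from by ring]
      _ = ∑' p : ℤ × ℤ, |h11 a (2*p.1 + 1, 2*p.2 + 1)| :=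
          shs (fun q => |h11 a (2*q.1 + 1, 2*q.2 + 1)|)
  -- the four residue classes sum to the whole
  have hps : Summable (fun x : (ℤ × ℤ) × (Bool × Bool) => |h11 a (par2 x)|) :=
    hSa.comp_injective par2.injective
  have hfour : (∑' p : ℤ × ℤ, |h11 a (2*p.1, 2*p.2)|) + (∑' p : ℤ × ℤ, |h11 a (2*p.1, 2*p.2 + 1)|)
      + (∑' p : ℤ × ℤ, |h11 a (2*p.1 + 1, 2*p.2)|)
      + (∑' p : ℤ × ℤ, |h11 a (2*p.1 + 1, 2*p.2 + 1)|) = ∑' q : ℤ × ℤ, |h11 a q| := by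
    symm
    calc ∑' q : ℤ × ℤ, |h11 a q|
        = ∑' x : (ℤ × ℤ) × (Bool × Bool), |h11 a (par2 x)| := (Equiv.tsum_eq par2 _).symm
      _ = ∑' p : ℤ × ℤ, ∑' st : Bool × Bool, |h11 a (par2 (p, st))| :=
          Summable.tsum_prod' hps (fun _ => Summable.of_finite)
      _ = ∑' p : ℤ × ℤ, (|h11 a (2*p.1, 2*p.2)| + |h11 a (2*p.1, 2*p.2 + 1)|
            + |h11 a (2*p.1 + 1, 2*p.2)| + |h11 a (2*p.1 + 1, 2*p.2 + 1)|) :=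
          tsum_congr fun p => by
            rw [tsum_fintype, Fintype.sum_prod_type]
            simp only [Fintype.sum_bool, par2, Equiv.coe_fn_mk, if_true, if_false,
              Bool.false_eq_true, ite_true, ite_false, add_zero]
            ring
      _ = (∑' p : ℤ × ℤ, |h11 a (2*p.1, 2*p.2)|) + (∑' p : ℤ × ℤ, |h11 a (2*p.1, 2*p.2 + 1)|)
            + (∑' p : ℤ × ℤ, |h11 a (2*p.1 + 1, 2*p.2)|)
            + (∑' p : ℤ × ℤ, |h11 a (2*p.1 + 1, 2*p.2 + 1)|) := by
          rw [Summable.tsum_add ((s5.add s6).add s8) s9, Summable.tsum_add (s5.add s6) s8, Summable.tsum_add s5 s6]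
  calc ∑' p : ℤ × ℤ, |h11 b p|
      ≤ ∑' p : ℤ × ℤ, ((1/4) * |h11 a (2*p.1 - 1, 2*p.2 - 1)| + (1/2) * |h11 a (2*p.1 - 1, 2*p.2)|
          + (1/4) * |h11 a (2*p.1 - 1, 2*p.2 + 1)| + (1/2) * |h11 a (2*p.1, 2*p.2 - 1)|
          + |h11 a (2*p.1, 2*p.2)| + (1/2) * |h11 a (2*p.1, 2*p.2 + 1)|
          + (1/4) * |h11 a (2*p.1 + 1, 2*p.2 - 1)| + (1/2) * |h11 a (2*p.1 + 1, 2*p.2)|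
          + (1/4) * |h11 a (2*p.1 + 1, 2*p.2 + 1)|) := Summable.tsum_le_tsum hpt hSb sR
    _ = ∑' q : ℤ × ℤ, |h11 a q| := by
        rw [Summable.tsum_add S8 (s9.mul_left (1/4)), Summable.tsum_add S7 (s8.mul_left (1/2)),
          Summable.tsum_add S6 (s7.mul_left (1/4)), Summable.tsum_add S5 (s6.mul_left (1/2)),
          Summable.tsum_add S4 s5, Summable.tsum_add S3 (s4.mul_left (1/2)),
          Summable.tsum_add S2 (s3.mul_left (1/4)), Summable.tsum_add (s1.mul_left (1/4)) (s2.mul_left (1/2)),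
          tsum_mul_left, tsum_mul_left, tsum_mul_left, tsum_mul_left, tsum_mul_left,
          tsum_mul_left, tsum_mul_left, tsum_mul_left]
        rw [sh1, sh2, sh3, sh4, sh7]
        linarith [hfour]
end
end

section
/- Let b be the 2×2-average downsampling of a finitely supported a : ℤ² → ℝ, b[n1,n2] = (1/4)(a[2n1−1,2n2−1]+a[2n1−1,2n2]+a[2n1,2n2−1]+a[2n1,2n2]). If f and Rf are the pixel functions on grids of step 2^{−n} and 2^{−(n−1)} with coefficients a and b respectively, then the total gradient variation is non-increasing under downsampling: ‖∇(Rf)‖_{M²} ≤ ‖∇f‖_{M²}, i.e., 2^{−(n−1)}(‖h_{1,0}∗b‖_{ℓ1} + ‖h_{0,1}∗b‖_{ℓ1}) ≤ 2^{−n}(‖h_{1,0}∗a‖_{ℓ1} + ‖h_{0,1}∗a‖_{ℓ1}). -/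
open MeasureTheory Set Filter

noncomputable section

namespace Stmt14Aux

/-- the reindexing equivalence: (r, p) ↦ (p.1*2+r.1, p.2*2+r.2) -/
def F : (Fin 2 × Fin 2) × (ℤ × ℤ) ≃ ℤ × ℤ :=
  ((Equiv.prodComm _ _).trans (Equiv.prodProdProdComm ℤ ℤ (Fin 2) (Fin 2))).trans
    ((Int.divModEquiv 2).symm.prodCongr (Int.divModEquiv 2).symm)

lemma F_apply (r : Fin 2 × Fin 2) (p : ℤ × ℤ) :
    F (r, p) = (p.1 * 2 + (r.1 : ℤ), p.2 * 2 + (r.2 : ℤ)) := rfl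

/-- partition of ℤ² into four parity classes -/
lemma partitionE (g : ℤ × ℤ → ENNReal) :
    ∑' q : ℤ × ℤ, g q
      = (∑' p : ℤ × ℤ, g (2*p.1, 2*p.2)) + (∑' p : ℤ × ℤ, g (2*p.1+1, 2*p.2))
      + (∑' p : ℤ × ℤ, g (2*p.1, 2*p.2+1)) + (∑' p : ℤ × ℤ, g (2*p.1+1, 2*p.2+1)) := by
  have h1 : ∑' q : ℤ × ℤ, g q = ∑' x : (Fin 2 × Fin 2) × (ℤ × ℤ), g (F x) :=
    (F.tsum_eq g).symm
  rw [h1]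
  have h2 : ∑' x : (Fin 2 × Fin 2) × (ℤ × ℤ), g (F x)
      = ∑' r : Fin 2 × Fin 2, ∑' p : ℤ × ℤ, g (F (r, p)) := by
    exact ENNReal.tsum_prod (f := fun r p => g (F (r, p)))
  have e1 : ∀ (u v : ℤ) (p : ℤ × ℤ), (p.1 * 2 + u, p.2 * 2 + v) = ((2*p.1+u, 2*p.2+v) : ℤ × ℤ) := by
    intro u v p; exact Prod.ext (by ring) (by ring)
  have key : ∀ r : Fin 2 × Fin 2, ∑' p : ℤ × ℤ, g (F (r, p))
      = ∑' p : ℤ × ℤ, g (2*p.1+(r.1:ℤ), 2*p.2+(r.2:ℤ)) :=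
    fun r => tsum_congr fun p => by rw [F_apply, e1]
  rw [h2, tsum_fintype]
  simp only [key]
  simp only [Fintype.sum_prod_type, Fin.sum_univ_two]
  norm_num
  ring

lemma gcong (g : ℤ × ℤ → ENNReal) {x1 x2 y1 y2 : ℤ} (h1 : x1 = y1) (h2 : x2 = y2) :
    g (x1, x2) = g (y1, y2) := by rw [h1, h2]

lemma shiftE (g : ℤ × ℤ → ENNReal) (c d u v : ℤ) :
    ∑' p : ℤ × ℤ, g (2*(p.1+u)+c, 2*(p.2+v)+d) = ∑' p : ℤ × ℤ, g (2*p.1+c, 2*p.2+d) := by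
  have h := Equiv.tsum_eq ((Equiv.addRight u).prodCongr (Equiv.addRight v))
    (fun q : ℤ × ℤ => g (2*q.1+c, 2*q.2+d))
  rw [← h]
  exact tsum_congr fun p => by simp [Equiv.prodCongr]

lemma abs8 (x1 x2 x3 x4 x5 x6 x7 x8 : ℝ) :
    |x1+x2+x3+x4+x5+x6+x7+x8| ≤ |x1|+|x2|+|x3|+|x4|+|x5|+|x6|+|x7|+|x8| := by
  have h1 := abs_add_le (x1+x2+x3+x4+x5+x6+x7) x8
  have h2 := abs_add_le (x1+x2+x3+x4+x5+x6) x7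
  have h3 := abs_add_le (x1+x2+x3+x4+x5) x6
  have h4 := abs_add_le (x1+x2+x3+x4) x5
  have h5 := abs_add_le (x1+x2+x3) x4
  have h6 := abs_add_le (x1+x2) x3
  have h7 := abs_add_le x1 x2
  linarith

/-- key lemma for the horizontal differences, ENNReal version -/
lemma key10 (a b : ℤ × ℤ → ℝ)
    (hb : ∀ p : ℤ × ℤ, b p = (1/4) * (a (2*p.1 - 1, 2*p.2 - 1) + a (2*p.1 - 1, 2*p.2)
      + a (2*p.1, 2*p.2 - 1) + a (2*p.1, 2*p.2))) :
    2 * ∑' p : ℤ × ℤ, ENNReal.ofReal |h10 b p| ≤ ∑' p : ℤ × ℤ, ENNReal.ofReal |h10 a p| := by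
  set g : ℤ × ℤ → ENNReal := fun q => ENNReal.ofReal |h10 a q| with hg
  -- the 4·difference identity
  have e1 : ∀ p : ℤ × ℤ, 4 * h10 b p
      = h10 a (2*p.1-1, 2*p.2-1) + h10 a (2*p.1, 2*p.2-1)
      + h10 a (2*p.1-1, 2*p.2) + h10 a (2*p.1, 2*p.2)
      + h10 a (2*p.1, 2*p.2-1) + h10 a (2*p.1+1, 2*p.2-1)
      + h10 a (2*p.1, 2*p.2) + h10 a (2*p.1+1, 2*p.2) := by
    intro p
    have hb1 := hb p
    have hb2 := hb (p.1 + 1, p.2)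
    simp only [h10] at *
    rw [hb1, hb2]
    have r1 : (2*(p.1+1) - 1 : ℤ) = 2*p.1 + 1 := by ring
    have r2 : (2*(p.1+1) : ℤ) = 2*p.1 + 1 + 1 := by ring
    have r3 : (2*p.1 - 1 + 1 : ℤ) = 2*p.1 := by ring
    simp only [r1, r2, r3]
    ring
  -- pointwise inequality in ENNReal
  have hpt : ∀ p : ℤ × ℤ, (4 : ENNReal) * ENNReal.ofReal |h10 b p|
      ≤ g (2*p.1-1, 2*p.2-1) + g (2*p.1, 2*p.2-1)
      + g (2*p.1-1, 2*p.2) + g (2*p.1, 2*p.2)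
      + g (2*p.1, 2*p.2-1) + g (2*p.1+1, 2*p.2-1)
      + g (2*p.1, 2*p.2) + g (2*p.1+1, 2*p.2) := by
    intro p
    have habs : 4 * |h10 b p| ≤ |h10 a (2*p.1-1, 2*p.2-1)| + |h10 a (2*p.1, 2*p.2-1)|
        + |h10 a (2*p.1-1, 2*p.2)| + |h10 a (2*p.1, 2*p.2)|
        + |h10 a (2*p.1, 2*p.2-1)| + |h10 a (2*p.1+1, 2*p.2-1)|
        + |h10 a (2*p.1, 2*p.2)| + |h10 a (2*p.1+1, 2*p.2)| := by
      calc 4 * |h10 b p| = |4 * h10 b p| := by rw [abs_mul]; norm_num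
        _ = _ := by rw [e1 p]
        _ ≤ _ := abs8 _ _ _ _ _ _ _ _
    calc (4 : ENNReal) * ENNReal.ofReal |h10 b p|
        = ENNReal.ofReal (4 * |h10 b p|) := by
          rw [ENNReal.ofReal_mul (by norm_num)]; norm_num
      _ ≤ ENNReal.ofReal (|h10 a (2*p.1-1, 2*p.2-1)| + |h10 a (2*p.1, 2*p.2-1)|
        + |h10 a (2*p.1-1, 2*p.2)| + |h10 a (2*p.1, 2*p.2)|
        + |h10 a (2*p.1, 2*p.2-1)| + |h10 a (2*p.1+1, 2*p.2-1)|
        + |h10 a (2*p.1, 2*p.2)| + |h10 a (2*p.1+1, 2*p.2)|) := ENNReal.ofReal_le_ofReal habs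
      _ = _ := by
          iterate 7 rw [ENNReal.ofReal_add (by positivity) (abs_nonneg _)]
  have hsum : ∑' p : ℤ × ℤ, ((4 : ENNReal) * ENNReal.ofReal |h10 b p|)
      ≤ ∑' p : ℤ × ℤ, (g (2*p.1-1, 2*p.2-1) + g (2*p.1, 2*p.2-1)
      + g (2*p.1-1, 2*p.2) + g (2*p.1, 2*p.2)
      + g (2*p.1, 2*p.2-1) + g (2*p.1+1, 2*p.2-1)
      + g (2*p.1, 2*p.2) + g (2*p.1+1, 2*p.2)) := ENNReal.tsum_le_tsum hpt
  rw [ENNReal.tsum_mul_left] at hsum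
  simp only [ENNReal.tsum_add] at hsum
  -- shift identities
  have A1 : (∑' p : ℤ × ℤ, g (2*p.1-1, 2*p.2-1)) = ∑' p : ℤ × ℤ, g (2*p.1+1, 2*p.2+1) := by
    calc ∑' p : ℤ × ℤ, g (2*p.1-1, 2*p.2-1)
        = ∑' p : ℤ × ℤ, g (2*(p.1+(-1))+1, 2*(p.2+(-1))+1) :=
          tsum_congr fun p => gcong g (by ring) (by ring)
      _ = _ := shiftE g 1 1 (-1) (-1)
  have A2 : (∑' p : ℤ × ℤ, g (2*p.1, 2*p.2-1)) = ∑' p : ℤ × ℤ, g (2*p.1, 2*p.2+1) := by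
    calc ∑' p : ℤ × ℤ, g (2*p.1, 2*p.2-1)
        = ∑' p : ℤ × ℤ, g (2*(p.1+0)+0, 2*(p.2+(-1))+1) :=
          tsum_congr fun p => gcong g (by ring) (by ring)
      _ = ∑' p : ℤ × ℤ, g (2*p.1+0, 2*p.2+1) := shiftE g 0 1 0 (-1)
      _ = _ := tsum_congr fun p => gcong g (by ring) rfl
  have A3 : (∑' p : ℤ × ℤ, g (2*p.1-1, 2*p.2)) = ∑' p : ℤ × ℤ, g (2*p.1+1, 2*p.2) := by
    calc ∑' p : ℤ × ℤ, g (2*p.1-1, 2*p.2)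
        = ∑' p : ℤ × ℤ, g (2*(p.1+(-1))+1, 2*(p.2+0)+0) :=
          tsum_congr fun p => gcong g (by ring) (by ring)
      _ = ∑' p : ℤ × ℤ, g (2*p.1+1, 2*p.2+0) := shiftE g 1 0 (-1) 0
      _ = _ := tsum_congr fun p => gcong g rfl (by ring)
  have A4 : (∑' p : ℤ × ℤ, g (2*p.1+1, 2*p.2-1)) = ∑' p : ℤ × ℤ, g (2*p.1+1, 2*p.2+1) := by
    calc ∑' p : ℤ × ℤ, g (2*p.1+1, 2*p.2-1)
        = ∑' p : ℤ × ℤ, g (2*(p.1+0)+1, 2*(p.2+(-1))+1) :=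
          tsum_congr fun p => gcong g (by ring) (by ring)
      _ = _ := shiftE g 1 1 0 (-1)
  rw [A1, A2, A3, A4] at hsum
  have hpartition := partitionE g
  have hfinal : (2 : ENNReal) * (2 * ∑' p : ℤ × ℤ, ENNReal.ofReal |h10 b p|)
      ≤ 2 * ∑' q : ℤ × ℤ, g q := by
    rw [← mul_assoc]
    have h4 : (2 : ENNReal) * 2 = 4 := by norm_num
    rw [h4, hpartition]
    calc (4 : ENNReal) * ∑' p : ℤ × ℤ, ENNReal.ofReal |h10 b p| ≤ _ := hsum
      _ = 2 * ((∑' p : ℤ × ℤ, g (2*p.1, 2*p.2)) + (∑' p : ℤ × ℤ, g (2*p.1+1, 2*p.2))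
          + (∑' p : ℤ × ℤ, g (2*p.1, 2*p.2+1)) + (∑' p : ℤ × ℤ, g (2*p.1+1, 2*p.2+1))) := by
          ring
  exact (ENNReal.mul_le_mul_iff_right (by norm_num) (by norm_num)).mp hfinal

lemma summable_abs_h10 (a : ℤ × ℤ → ℝ) (ha : (Function.support a).Finite) :
    Summable fun p => |h10 a p| := by
  classical
  apply summable_of_ne_finset_zero
    (s := (ha.union (ha.image (fun q : ℤ × ℤ => (q.1 - 1, q.2)))).toFinset)
  intro p hp
  simp only [Set.Finite.mem_toFinset, Set.mem_union, Function.mem_support, Set.mem_image,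
    not_or, not_exists, not_and] at hp
  obtain ⟨h1, h2⟩ := hp
  have h3 : a p = 0 := not_not.mp h1
  have h4 : a (p.1 + 1, p.2) = 0 := by
    by_contra hc
    apply h2 (p.1 + 1, p.2) hc
    have : (p.1 + 1 - 1 : ℤ) = p.1 := by ring
    rw [this]
  simp [h10, h3, h4]

lemma supp_b_finite (a : ℤ × ℤ → ℝ) (ha : (Function.support a).Finite) (b : ℤ × ℤ → ℝ)
    (hb : ∀ p : ℤ × ℤ, b p = (1/4) * (a (2*p.1 - 1, 2*p.2 - 1) + a (2*p.1 - 1, 2*p.2)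
      + a (2*p.1, 2*p.2 - 1) + a (2*p.1, 2*p.2))) :
    (Function.support b).Finite := by
  classical
  have hsub : Function.support b ⊆
      (fun p : ℤ × ℤ => ((2*p.1 - 1, 2*p.2 - 1) : ℤ × ℤ)) ⁻¹' (Function.support a)
      ∪ (fun p : ℤ × ℤ => ((2*p.1 - 1, 2*p.2) : ℤ × ℤ)) ⁻¹' (Function.support a)
      ∪ (fun p : ℤ × ℤ => ((2*p.1, 2*p.2 - 1) : ℤ × ℤ)) ⁻¹' (Function.support a)
      ∪ (fun p : ℤ × ℤ => ((2*p.1, 2*p.2) : ℤ × ℤ)) ⁻¹' (Function.support a) := by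
    intro p hp
    by_contra hc
    simp only [Set.mem_union, Set.mem_preimage, Function.mem_support, not_or, not_not] at hc
    obtain ⟨⟨⟨c1, c2⟩, c3⟩, c4⟩ := hc
    exact hp (by rw [hb p, c1, c2, c3, c4]; ring)
  have hinj : ∀ u v : ℤ, Function.Injective (fun p : ℤ × ℤ => ((2*p.1 + u, 2*p.2 + v) : ℤ × ℤ)) := by
    intro u v x y h
    simp only [Prod.mk.injEq] at h
    exact Prod.ext (by omega) (by omega)
  have hfin : ∀ u v : ℤ, ((fun p : ℤ × ℤ => ((2*p.1 + u, 2*p.2 + v) : ℤ × ℤ)) ⁻¹'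
      (Function.support a)).Finite :=
    fun u v => Set.Finite.preimage ((hinj u v).injOn) ha
  have heq : ∀ u v : ℤ, (fun p : ℤ × ℤ => ((2*p.1 - u, 2*p.2 - v) : ℤ × ℤ))
      = fun p : ℤ × ℤ => ((2*p.1 + (-u), 2*p.2 + (-v)) : ℤ × ℤ) := by
    intro u v; funext p; exact Prod.ext (by ring) (by ring)
  refine Set.Finite.subset ?_ hsub
  refine (((?_ : _root_.Set.Finite _).union ?_).union ?_).union ?_
  · rw [show (fun p : ℤ × ℤ => ((2*p.1 - 1, 2*p.2 - 1) : ℤ × ℤ))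
      = fun p : ℤ × ℤ => ((2*p.1 + (-1), 2*p.2 + (-1)) : ℤ × ℤ) from
        funext fun p => Prod.ext (by ring) (by ring)]
    exact hfin (-1) (-1)
  · rw [show (fun p : ℤ × ℤ => ((2*p.1 - 1, 2*p.2) : ℤ × ℤ))
      = fun p : ℤ × ℤ => ((2*p.1 + (-1), 2*p.2 + 0) : ℤ × ℤ) from
        funext fun p => Prod.ext (by ring) (by ring)]
    exact hfin (-1) 0
  · rw [show (fun p : ℤ × ℤ => ((2*p.1, 2*p.2 - 1) : ℤ × ℤ))
      = fun p : ℤ × ℤ => ((2*p.1 + 0, 2*p.2 + (-1)) : ℤ × ℤ) from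
        funext fun p => Prod.ext (by ring) (by ring)]
    exact hfin 0 (-1)
  · rw [show (fun p : ℤ × ℤ => ((2*p.1, 2*p.2) : ℤ × ℤ))
      = fun p : ℤ × ℤ => ((2*p.1 + 0, 2*p.2 + 0) : ℤ × ℤ) from
        funext fun p => Prod.ext (by ring) (by ring)]
    exact hfin 0 0

lemma h10_swap (c : ℤ × ℤ → ℝ) (p : ℤ × ℤ) :
    h10 (c ∘ Prod.swap) (Prod.swap p) = h01 c p := by
  simp [h10, h01, Prod.swap, Function.comp]

lemma swap10 (c : ℤ × ℤ → ℝ) :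
    (∑' p : ℤ × ℤ, ENNReal.ofReal |h10 (c ∘ Prod.swap) p|)
      = ∑' p : ℤ × ℤ, ENNReal.ofReal |h01 c p| := by
  calc ∑' p : ℤ × ℤ, ENNReal.ofReal |h10 (c ∘ Prod.swap) p|
      = ∑' p : ℤ × ℤ, (fun q : ℤ × ℤ => ENNReal.ofReal |h10 (c ∘ Prod.swap) q|)
          ((Equiv.prodComm ℤ ℤ) p) :=
        (Equiv.tsum_eq (Equiv.prodComm ℤ ℤ) _).symm
    _ = _ := tsum_congr fun p => by
        show ENNReal.ofReal |h10 (c ∘ Prod.swap) (Prod.swap p)| = _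
        rw [h10_swap]

end Stmt14Aux

open Stmt14Aux

theorem stmt14 (n : ℕ) (a : ℤ × ℤ → ℝ) (ha : (Function.support a).Finite)
    (b : ℤ × ℤ → ℝ)
    (hb : ∀ p : ℤ × ℤ, b p = (1/4) * (a (2*p.1 - 1, 2*p.2 - 1) + a (2*p.1 - 1, 2*p.2)
      + a (2*p.1, 2*p.2 - 1) + a (2*p.1, 2*p.2))) :
    (2:ℝ) ^ (-((n:ℤ) - 1)) * (∑' p : ℤ × ℤ, |h10 b p| + ∑' p : ℤ × ℤ, |h01 b p|) ≤
    (2:ℝ) ^ (-(n:ℤ)) * (∑' p : ℤ × ℤ, |h10 a p| + ∑' p : ℤ × ℤ, |h01 a p|) := by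
  classical
  have hsb : (Function.support b).Finite := supp_b_finite a ha b hb
  have ha' : (Function.support (a ∘ Prod.swap)).Finite := by
    rw [Function.support_comp_eq_preimage]
    exact Set.Finite.preimage (Prod.swap_injective.injOn) ha
  have hsb' : (Function.support (b ∘ Prod.swap)).Finite := by
    rw [Function.support_comp_eq_preimage]
    exact Set.Finite.preimage (Prod.swap_injective.injOn) hsb
  -- summability
  have sum_a10 : Summable fun p => |h10 a p| := summable_abs_h10 a ha
  have sum_b10 : Summable fun p => |h10 b p| := summable_abs_h10 b hsb
  have sum_a01 : Summable fun p => |h01 a p| := by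
    have h := summable_abs_h10 (a ∘ Prod.swap) ha'
    have h2 : Summable ((fun q : ℤ × ℤ => |h10 (a ∘ Prod.swap) q|) ∘ (Equiv.prodComm ℤ ℤ)) :=
      (Equiv.summable_iff (Equiv.prodComm ℤ ℤ)).mpr h
    have h3 : (fun p : ℤ × ℤ => |h01 a p|)
        = (fun q : ℤ × ℤ => |h10 (a ∘ Prod.swap) q|) ∘ (Equiv.prodComm ℤ ℤ) :=
      funext fun p => by simp only [Function.comp]; rw [show ((Equiv.prodComm ℤ ℤ) p) = Prod.swap p from rfl, h10_swap]
    rw [h3]; exact h2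
  have sum_b01 : Summable fun p => |h01 b p| := by
    have h := summable_abs_h10 (b ∘ Prod.swap) hsb'
    have h2 : Summable ((fun q : ℤ × ℤ => |h10 (b ∘ Prod.swap) q|) ∘ (Equiv.prodComm ℤ ℤ)) :=
      (Equiv.summable_iff (Equiv.prodComm ℤ ℤ)).mpr h
    have h3 : (fun p : ℤ × ℤ => |h01 b p|)
        = (fun q : ℤ × ℤ => |h10 (b ∘ Prod.swap) q|) ∘ (Equiv.prodComm ℤ ℤ) :=
      funext fun p => by simp only [Function.comp]; rw [show ((Equiv.prodComm ℤ ℤ) p) = Prod.swap p from rfl, h10_swap]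
    rw [h3]; exact h2
  -- ENNReal key inequalities
  have k10 : 2 * ∑' p : ℤ × ℤ, ENNReal.ofReal |h10 b p|
      ≤ ∑' p : ℤ × ℤ, ENNReal.ofReal |h10 a p| := key10 a b hb
  have hb' : ∀ p : ℤ × ℤ, (b ∘ Prod.swap) p = (1/4) * ((a ∘ Prod.swap) (2*p.1 - 1, 2*p.2 - 1)
      + (a ∘ Prod.swap) (2*p.1 - 1, 2*p.2) + (a ∘ Prod.swap) (2*p.1, 2*p.2 - 1)
      + (a ∘ Prod.swap) (2*p.1, 2*p.2)) := by
    intro p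
    simp only [Function.comp, Prod.swap_prod_mk]
    rw [show (Prod.swap p) = (p.2, p.1) from rfl, hb (p.2, p.1)]
    ring
  have k01 : 2 * ∑' p : ℤ × ℤ, ENNReal.ofReal |h01 b p|
      ≤ ∑' p : ℤ × ℤ, ENNReal.ofReal |h01 a p| := by
    have h := key10 (a ∘ Prod.swap) (b ∘ Prod.swap) hb'
    rwa [swap10 a, swap10 b] at h
  -- conversion to real
  have conv : ∀ (f : ℤ × ℤ → ℝ), Summable (fun p => |f p|) →
      ENNReal.ofReal (∑' p : ℤ × ℤ, |f p|) = ∑' p : ℤ × ℤ, ENNReal.ofReal |f p| :=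
    fun f hf => ENNReal.ofReal_tsum_of_nonneg (fun p => abs_nonneg _) hf
  have nn : ∀ (f : ℤ × ℤ → ℝ), (0:ℝ) ≤ ∑' p : ℤ × ℤ, |f p| :=
    fun f => tsum_nonneg fun _ => abs_nonneg _
  have main : 2 * ((∑' p : ℤ × ℤ, |h10 b p|) + ∑' p : ℤ × ℤ, |h01 b p|)
      ≤ (∑' p : ℤ × ℤ, |h10 a p|) + ∑' p : ℤ × ℤ, |h01 a p| := by
    rw [← ENNReal.ofReal_le_ofReal_iff (add_nonneg (nn _) (nn _))]
    rw [ENNReal.ofReal_mul (by norm_num : (0:ℝ) ≤ 2)]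
    rw [ENNReal.ofReal_add (nn (h10 b)) (nn (h01 b)), ENNReal.ofReal_add (nn (h10 a)) (nn (h01 a))]
    rw [conv _ sum_b10, conv _ sum_b01, conv _ sum_a10, conv _ sum_a01]
    have e2 : ENNReal.ofReal (2:ℝ) = 2 := by norm_num
    rw [e2, mul_add]
    exact add_le_add k10 k01
  -- the powers of two
  have hpow : (2:ℝ) ^ (-((n:ℤ) - 1)) = 2 * (2:ℝ) ^ (-(n:ℤ)) := by
    rw [show -((n:ℤ) - 1) = -(n:ℤ) + 1 by ring, zpow_add₀ (by norm_num : (2:ℝ) ≠ 0)]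
    ring
  rw [hpow]
  have hrearr : 2 * (2:ℝ) ^ (-(n:ℤ)) * ((∑' p : ℤ × ℤ, |h10 b p|) + ∑' p : ℤ × ℤ, |h01 b p|)
      = (2:ℝ) ^ (-(n:ℤ)) * (2 * ((∑' p : ℤ × ℤ, |h10 b p|) + ∑' p : ℤ × ℤ, |h01 b p|)) := by
    ring
  rw [hrearr]
  exact mul_le_mul_of_nonneg_left main (by positivity)
end
end
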